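/- arXiv:1212.5106 — 4 statements merged into one kernel-verified Lean document; each statement's English description precedes it below -/
import Mathlib

section
/- Let u be a finite word over alphabet A = {1,2,3}, i ∈ A, and suppose u' satisfies i^δ · σ_i(u') = u · i^ε with δ, ε as above (δ = 1 iff u starts with i; ε = 1 iff u does not end with i). If |u| ≥ 2 then |u'| < |u|, and if |u| ∈ {0,1} then |u'| ∈ {0,1}. -/
/-! Every image `σ_i(j)` contains exactly one `i`, so counting the letter `i` on both sides of
`i^δ σ_i(u') = u i^ε` gives `δ + |u'| = |u|_i + ε`. The first and last letters of `u` contribute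
to `|u|_i` exactly when they cancel against `δ` and `ε`, which leaves `|u'| ≤ max (|u| - 1) 1`. -/

/-- The Arnoux-Rauzy substitution `σ_i : i ↦ i, j ↦ j i` for `j ≠ i`,
extended to words. Letters 1,2,3 are represented by `0,1,2 : Fin 3`. -/
def sigmaSub {A : Type*} [DecidableEq A] (i : A) (w : List A) : List A :=
  w.flatMap fun j => if j = i then [i] else [j, i]

section

variable {A : Type*} [DecidableEq A]

theorem count_sigmaSub_self (i : A) (w : List A) : (sigmaSub i w).count i = w.length := by
  induction w with
  | nil => rfl
  | cons a t ih =>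
    by_cases ha : a = i <;> simp_all [sigmaSub]

theorem count_add_ite_getLast_le (i : A) (u : List A) :
    u.count i + (if u.getLast? = some i then 0 else 1)
      ≤ (if u.head? = some i then 1 else 0) + max (u.length - 1) 1 := by
  rcases u with _ | ⟨a, t⟩
  · simp
  rcases t.eq_nil_or_concat with rfl | ⟨w, b, rfl⟩
  · by_cases ha : a = i <;> simp [ha]
  · have hw : w.count i ≤ w.length := List.count_le_length
    have hlast : (a :: (w ++ [b])).getLast? = some b := by
      rw [← List.cons_append, List.getLast?_concat]
    rw [List.concat_eq_append, hlast]
    by_cases ha : a = i <;> by_cases hb : b = i <;>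
      simp [ha, hb, List.count_append] <;> omega

end

/-- If `i^δ · σ_i(u') = u · i^ε` (with `δ, ε` the boundary indicators), then
`|u'| < |u|` whenever `|u| ≥ 2`, and `|u'| ∈ {0,1}` whenever `|u| ∈ {0,1}`. -/
theorem length_of_desubstitution (i : Fin 3) (u u' : List (Fin 3)) (δ ε : ℕ)
    (hδ : δ = if u.head? = some i then 1 else 0)
    (hε : ε = if u.getLast? = some i then 0 else 1)
    (h : List.replicate δ i ++ sigmaSub i u' = u ++ List.replicate ε i) :
    (2 ≤ u.length → u'.length < u.length) ∧ (u.length ≤ 1 → u'.length ≤ 1) := by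
  have hcount : δ + u'.length = u.count i + ε := by
    simpa [List.count_append, List.count_replicate, count_sigmaSub_self] using
      congrArg (List.count i) h
  have hbound := count_add_ite_getLast_le i u
  rw [← hδ, ← hε] at hbound
  omega
end

section
/- Let u, v be finite words over a finite alphabet A, let j ∈ A, and let C ∈ ℕ. Suppose |u|_j − |v|_j > C + max(0, |u| − |v|). Then there exist a factor û of u and a factor v̂ of v with |û| = |v̂| = min(|u|, |v|) and |û|_j − |v̂|_j > C. -/
/-! Take the prefixes of length `min |u| |v|`: truncating `u` loses at most
`|u| - min |u| |v| = max 0 (|u| - |v|)` occurrences of `j`, while truncating `v` cannot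
increase its count of `j`. -/

theorem List.count_le_count_take_add_length_sub {α : Type*} [BEq α] (l : List α) (a : α)
    (m : ℕ) : l.count a ≤ (l.take m).count a + (l.length - m) := by
  calc l.count a = (l.take m).count a + (l.drop m).count a := by
        rw [← List.count_append, List.take_append_drop]
    _ ≤ (l.take m).count a + (l.length - m) := by
        gcongr
        exact List.count_le_length.trans_eq List.length_drop

/-- If `|u|_j − |v|_j > C + max(0, |u| − |v|)`, then there are factors `û` of `u`
and `v̂` of `v` with `|û| = |v̂| = min(|u|,|v|)` and `|û|_j − |v̂|_j > C`. -/
theorem exists_unbalanced_factors_of_max {A : Type*} [DecidableEq A]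
    (u v : List A) (j : A) (C : ℕ)
    (h : (u.count j : ℤ) - v.count j > C + max 0 ((u.length : ℤ) - v.length)) :
    ∃ uh vh : List A, uh <:+: u ∧ vh <:+: v ∧
      uh.length = min u.length v.length ∧ vh.length = min u.length v.length ∧
      (uh.count j : ℤ) - vh.count j > C := by
  set m := min u.length v.length
  refine ⟨u.take m, v.take m, (u.take_prefix m).isInfix, (v.take_prefix m).isInfix,
    by simp [m], by simp [m], ?_⟩
  have hu := u.count_le_count_take_add_length_sub j m
  have hv : (v.take m).count j ≤ v.count j := (v.take_sublist m).count_le j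
  omega
end

section
/- Let i ∈ A be a letter, w ∈ A^* a word, and let u, v be factors of σ_i(w) with |u| ≥ |v|. Let j ∈ A with j ≠ i and C ∈ ℕ. If |u|_j − |v|_j > C + ⌈(|u| − |v|)/2⌉, then there exist a factor û of u and a factor v̂ of v with |û| = |v̂| and |û|_j − |v̂|_j > C. -/
theorem ceil_natCast_div_two (d : ℕ) : ⌈(d / 2 : ℚ)⌉ = ((d + 1) / 2 : ℕ) := by
  have := Rat.ceil_natCast_div_natCast d 2
  push_cast at this ⊢
  omega

namespace List

variable {α : Type*} [DecidableEq α] {j : α}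

theorem count_le_half_of_isChain :
    ∀ {l : List α}, l.IsChain (fun a b => ¬(a = j ∧ b = j)) → l.count j ≤ (l.length + 1) / 2
  | [], _ => by simp
  | [a], _ => by simp only [count_singleton, length_singleton]; split <;> simp
  | a :: b :: t, h => by
    have hab : count j [a, b] ≤ 1 := by
      have := (isChain_cons_cons.mp h).1
      simp only [count_cons, count_nil, beq_iff_eq]
      split_ifs <;> simp_all
    have ht := count_le_half_of_isChain h.tail.tail
    have hsplit : count j (a :: b :: t) = count j [a, b] + count j t :=
      count_append (l₁ := [a, b])
    simp only [length_cons, tail_cons] at ht ⊢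
    omega

theorem count_le_count_drop_add_half {u : List α}
    (hu : u.IsChain (fun a b => ¬(a = j ∧ b = j))) (d : ℕ) :
    u.count j ≤ (u.drop d).count j + (d + 1) / 2 := by
  have htake := count_le_half_of_isChain (hu.take d)
  have hsplit : u.count j = (u.take d).count j + (u.drop d).count j := by
    rw [← count_append, take_append_drop]
  have : (u.take d).length ≤ d := length_take_le d u
  omega

end List

theorem isChain_sigmaSub {A : Type*} [DecidableEq A] (i : A) (w : List A) :
    (sigmaSub i w).IsChain (fun a b => a = i ∨ b = i) := by
  induction w with
  | nil => simp [sigmaSub]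
  | cons a t ih =>
    simp only [sigmaSub, List.flatMap_cons] at ih ⊢
    split_ifs
    · exact ih.cons fun _ _ => Or.inl rfl
    · exact .cons_cons (Or.inr rfl) (ih.cons fun _ _ => Or.inl rfl)

theorem exists_unbalanced_factors_of_ceil_general {A : Type*} [DecidableEq A]
    (i j : A) (hij : j ≠ i) (w u v : List A) (C : ℕ)
    (hu : u <:+: sigmaSub i w)
    (hlen : v.length ≤ u.length)
    (h : (u.count j : ℤ) - v.count j > C + ⌈(((u.length : ℚ) - v.length) / 2)⌉) :
    ∃ uh vh : List A, uh <:+: u ∧ vh <:+: v ∧ uh.length = vh.length ∧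
      (uh.count j : ℤ) - vh.count j > C := by
  have hchain : u.IsChain (fun a b => ¬(a = j ∧ b = j)) :=
    ((isChain_sigmaSub i w).infix hu).imp fun a b hab ⟨ha, hb⟩ =>
      hij (hab.elim (ha ▸ ·) (hb ▸ ·))
  rw [← Nat.cast_sub hlen, ceil_natCast_div_two] at h
  have hdrop := List.count_le_count_drop_add_half hchain (u.length - v.length)
  refine ⟨u.drop (u.length - v.length), v, (u.drop_suffix _).isInfix, List.infix_refl v, ?_, ?_⟩
  · rw [List.length_drop]
    omega
  · omega

/-- If `u, v` are factors of `σ_i(w)` with `|u| ≥ |v|`, `j ≠ i`, and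
`|u|_j − |v|_j > C + ⌈(|u| − |v|)/2⌉`, then there are equal-length factors
`û` of `u` and `v̂` of `v` with `|û|_j − |v̂|_j > C`. -/
theorem exists_unbalanced_factors_of_ceil {A : Type*} [DecidableEq A]
    (i j : A) (hij : j ≠ i) (w u v : List A) (C : ℕ)
    (hu : u <:+: sigmaSub i w) (hv : v <:+: sigmaSub i w)
    (hlen : v.length ≤ u.length)
    (h : (u.count j : ℤ) - v.count j > C + ⌈(((u.length : ℚ) - v.length) / 2)⌉) :
    ∃ uh vh : List A, uh <:+: u ∧ vh <:+: v ∧ uh.length = vh.length ∧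
      (uh.count j : ℤ) - vh.count j > C :=
  exists_unbalanced_factors_of_ceil_general i j hij w u v C hu hlen h
end

section
/- Let ω be an Arnoux-Rauzy word over {1,2,3} whose directive sequence (i_m) starts with 2233 (i.e., i_0 i_1 i_2 i_3 = 2233). Then ω contains two factors u, v with |u|_1 − |v|_1 = 1, |u|_2 − |v|_2 = 2, and |u|_3 − |v|_3 = −2. -/
/-- `ARword dir n = σ_{i₀} σ_{i₁} ⋯ σ_{i_{n-1}} (1)` for the directive
sequence `dir`, where the letter `1` is represented by `0 : Fin 3`. -/
def ARword (dir : ℕ → Fin 3) (n : ℕ) : List (Fin 3) :=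
  ((List.range n).map dir).foldr sigmaSub [0]

/-- `u` is a factor of the infinite word `ω`. -/
def FactorOf {A : Type*} (ω : ℕ → A) (u : List A) : Prop :=
  ∃ k, u = (List.range u.length).map fun t => ω (k + t)

/-- `ω` is an Arnoux-Rauzy word with directive sequence `dir`: every letter
occurs infinitely often in `dir`, and the factors of `ω` are exactly the
factors of the words `σ_{i₀} ⋯ σ_{i_{n-1}}(1)`. -/
def IsAR (ω : ℕ → Fin 3) (dir : ℕ → Fin 3) : Prop :=
  (∀ a : Fin 3, ∀ m : ℕ, ∃ n, m ≤ n ∧ dir n = a) ∧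
  (∀ u : List (Fin 3), FactorOf ω u ↔ ∃ n, u <:+: ARword dir n)

/-- `ω` is `C`-balanced: any two factors of equal length have all letter-count
differences bounded by `C` in absolute value. -/
def IsBalanced {A : Type*} [DecidableEq A] (C : ℕ) (ω : ℕ → A) : Prop :=
  ∀ u v : List A, FactorOf ω u → FactorOf ω v → u.length = v.length →
    ∀ j : A, |(u.count j : ℤ) - v.count j| ≤ C

/-!
Write `τ = σ₂σ₂σ₃σ₃`. For `n ≥ 4`, the word `σ_{i₀} ⋯ σ_{i_{n-1}}(1)` is `τ(W)` with
`W = σ_{i₄} ⋯ σ_{i_{n-1}}(1)`, and since `τ(x)` ends with `322` for every letter `x`, an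
occurrence of `x` in `W` other than its first letter yields the factor `322 τ(x)`. With
`τ(1) = 122322322` and `τ(3) = 322` this gives the factors `u = 22122` of `322122…` and
`v = 3223` of `322322`, whose Parikh vectors are `(1, 4, 0)` and `(0, 2, 2)`. Every letter `a`
occurs at a non-initial position of some `W`: if `i_j = a` and `i_k ≠ a` with `4 ≤ j < k < n`,
then `σ_{i_j}` puts an `a` right after the letter `i_k` of `σ_{i_{j+1}} ⋯ σ_{i_{n-1}}(1)`, and
the remaining substitutions keep that occurrence off the first position.
-/

section SigmaSub

variable {A : Type*} [DecidableEq A]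

theorem sigmaSub_append (i : A) (a b : List A) :
    sigmaSub i (a ++ b) = sigmaSub i a ++ sigmaSub i b := by
  simp [sigmaSub]

theorem mem_sigmaSub_of_mem (i : A) {x : A} {w : List A} (h : x ∈ w) : x ∈ sigmaSub i w := by
  simp only [sigmaSub, List.mem_flatMap]
  exact ⟨x, h, by split <;> simp_all⟩

theorem mem_sigmaSub_self (i : A) {w : List A} (hw : w ≠ []) : i ∈ sigmaSub i w := by
  obtain ⟨y, t, rfl⟩ := List.exists_cons_of_ne_nil hw
  by_cases hy : y = i <;> simp [sigmaSub, hy]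

theorem mem_foldr_sigmaSub (L : List A) {x : A} {w : List A} (h : x ∈ w) :
    x ∈ L.foldr sigmaSub w := by
  induction L with
  | nil => exact h
  | cons i L ih => exact mem_sigmaSub_of_mem i ih

theorem sigmaSub_tail_suffix_tail_sigmaSub (i : A) (w : List A) :
    sigmaSub i w.tail <:+ (sigmaSub i w).tail := by
  cases w with
  | nil => simp [sigmaSub]
  | cons y t =>
    rw [← List.singleton_append, sigmaSub_append]
    by_cases hy : y = i <;> simp [sigmaSub, hy]

theorem mem_tail_sigmaSub_of_mem_tail (i : A) {x : A} {w : List A} (h : x ∈ w.tail) :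
    x ∈ (sigmaSub i w).tail :=
  (sigmaSub_tail_suffix_tail_sigmaSub i w).subset (mem_sigmaSub_of_mem i h)

theorem mem_tail_sigmaSub_self {i j : A} {w : List A} (hj : j ∈ w) (hji : j ≠ i) :
    i ∈ (sigmaSub i w).tail := by
  obtain ⟨a, b, rfl⟩ := List.append_of_mem hj
  rw [sigmaSub_append, ← List.singleton_append, sigmaSub_append]
  cases sigmaSub i a <;> simp [sigmaSub, hji]

theorem mem_tail_foldr_sigmaSub (L : List A) {x : A} {w : List A} (h : x ∈ w.tail) :
    x ∈ (L.foldr sigmaSub w).tail := by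
  induction L with
  | nil => exact h
  | cons i L ih => exact mem_tail_sigmaSub_of_mem_tail i ih

end SigmaSub

section ARword

theorem ARword_add (d : ℕ → Fin 3) (m n : ℕ) :
    ARword d (m + n) = ((List.range m).map d).foldr sigmaSub (ARword (fun i => d (m + i)) n) := by
  rw [ARword, List.range_add, List.map_append, List.foldr_append, List.map_map]
  rfl

theorem ARword_one_add (d : ℕ → Fin 3) (n : ℕ) :
    ARword d (1 + n) = sigmaSub (d 0) (ARword (fun i => d (1 + i)) n) :=
  ARword_add d 1 n

theorem zero_mem_ARword (d : ℕ → Fin 3) (n : ℕ) : 0 ∈ ARword d n :=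
  mem_foldr_sigmaSub _ (List.mem_singleton_self 0)

theorem ARword_ne_nil (d : ℕ → Fin 3) (n : ℕ) : ARword d n ≠ [] :=
  List.ne_nil_of_mem (zero_mem_ARword d n)

theorem mem_ARword (d : ℕ → Fin 3) {j n : ℕ} (h : j < n) : d j ∈ ARword d n := by
  obtain ⟨k, rfl⟩ : ∃ k, n = j + (1 + k) := ⟨n - j - 1, by omega⟩
  rw [ARword_add, ARword_one_add]
  exact mem_foldr_sigmaSub _ (mem_sigmaSub_self _ (ARword_ne_nil _ _))

theorem mem_tail_ARword (d : ℕ → Fin 3) {i j n : ℕ} (hij : i < j) (hjn : j < n)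
    (hne : d j ≠ d i) : d i ∈ (ARword d n).tail := by
  obtain ⟨k, rfl⟩ : ∃ k, n = i + (1 + k) := ⟨n - i - 1, by omega⟩
  rw [ARword_add, ARword_one_add]
  refine mem_tail_foldr_sigmaSub _ (mem_tail_sigmaSub_self (j := d j) ?_ (by simpa using hne))
  simpa [show i + (1 + (j - i - 1)) = j by omega] using
    mem_ARword (fun t => d (i + (1 + t))) (j := j - i - 1) (by omega)

theorem exists_mem_tail_ARword (d : ℕ → Fin 3) (hd : ∀ a : Fin 3, ∀ m : ℕ, ∃ n, m ≤ n ∧ d n = a)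
    (a : Fin 3) : ∃ n, a ∈ (ARword d n).tail := by
  obtain ⟨i, -, hi⟩ := hd a 0
  obtain ⟨j, hij, hj⟩ := hd (a + 1) (i + 1)
  have hne : d j ≠ d i := by
    rw [hi, hj]
    fin_cases a <;> decide
  exact ⟨j + 1, hi ▸ mem_tail_ARword d (by omega) (Nat.lt_succ_self j) hne⟩

end ARword

section Sigma2233

/-- `σ₂σ₂σ₃σ₃` in the letters of the paper. -/
def sigma2233 (w : List (Fin 3)) : List (Fin 3) :=
  sigmaSub 1 (sigmaSub 1 (sigmaSub 2 (sigmaSub 2 w)))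

theorem sigma2233_append (a b : List (Fin 3)) :
    sigma2233 (a ++ b) = sigma2233 a ++ sigma2233 b := by
  simp [sigma2233, sigmaSub_append]

theorem suffix_sigma2233_singleton (z : Fin 3) : [2, 1, 1] <:+ sigma2233 [z] := by
  fin_cases z <;> decide

theorem infix_sigma2233_of_mem_tail {x : Fin 3} {w : List (Fin 3)} (h : x ∈ w.tail) :
    [2, 1, 1] ++ sigma2233 [x] <:+: sigma2233 w := by
  obtain ⟨y, t, rfl⟩ := List.exists_cons_of_ne_nil (List.ne_nil_of_mem (List.mem_of_mem_tail h))
  obtain ⟨a, b, rfl⟩ := List.append_of_mem (l := t) h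
  obtain ⟨p, z, hpz⟩ : ∃ p z, y :: a = p ++ [z] :=
    ⟨_, _, (List.dropLast_append_getLast (List.cons_ne_nil y a)).symm⟩
  obtain ⟨q, hq⟩ := suffix_sigma2233_singleton z
  refine ⟨sigma2233 p ++ q, sigma2233 b, ?_⟩
  have hw : y :: (a ++ x :: b) = p ++ [z] ++ [x] ++ b := by rw [← List.cons_append, hpz]; simp
  rw [hw, sigma2233_append, sigma2233_append, sigma2233_append, ← hq]
  simp

theorem ARword_add_four {dir : ℕ → Fin 3} (hpre : (List.range 4).map dir = [1, 1, 2, 2])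
    (n : ℕ) : ARword dir (4 + n) = sigma2233 (ARword (fun i => dir (4 + i)) n) := by
  rw [ARword_add, hpre]
  rfl

end Sigma2233

/-- If the directive sequence of an Arnoux-Rauzy word `ω` starts with `2233`
(i.e. `1,1,2,2` in our `Fin 3` encoding of the letters 1,2,3), then `ω` has two
factors `u, v` with Parikh-vector difference `(1, 2, −2)`. -/
theorem parikh_difference_of_prefix_2233
    (ω dir : ℕ → Fin 3) (hAR : IsAR ω dir)
    (hpre : (List.range 4).map dir = [1, 1, 2, 2]) :
    ∃ u v : List (Fin 3), FactorOf ω u ∧ FactorOf ω v ∧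
      (u.count 0 : ℤ) - v.count 0 = 1 ∧
      (u.count 1 : ℤ) - v.count 1 = 2 ∧
      (u.count 2 : ℤ) - v.count 2 = -2 := by
  obtain ⟨hrec, hfactor⟩ := hAR
  have hrec₄ : ∀ a : Fin 3, ∀ m : ℕ, ∃ n, m ≤ n ∧ dir (4 + n) = a := fun a m => by
    obtain ⟨n, hmn, hn⟩ := hrec a (4 + m)
    exact ⟨n - 4, by omega, by rwa [show 4 + (n - 4) = n by omega]⟩
  have factor_of_mem_tail (x : Fin 3) (w : List (Fin 3)) (hw : w <:+: [2, 1, 1] ++ sigma2233 [x]) :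
      FactorOf ω w := by
    obtain ⟨n, hn⟩ := exists_mem_tail_ARword _ hrec₄ x
    exact (hfactor w).2 ⟨4 + n, ARword_add_four hpre n ▸ hw.trans (infix_sigma2233_of_mem_tail hn)⟩
  exact ⟨[1, 1, 0, 1, 1], [2, 1, 1, 2], factor_of_mem_tail 0 _ (by decide),
    factor_of_mem_tail 2 _ (by decide), by decide, by decide, by decide⟩
end
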